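/- Let h: ℝ → ℝ with h(0) = 0 and h(r) ≠ 0 for fixed r > 0, and let β ∈ ℝ^d be a constant vector. Define E[j] = μ[j] + β where μ[j] = ∑_{i=0}^{j} h(ri) z[j−i], and let n ≥ 2. If (z, β) and (z', β') satisfy μ[j] + β = μ'[j] + β' for all j = 1,…,n, then z = z' implies β = β'; conversely, if they yield identical outputs E[j] = E'[j] for all j = 1,…,n and z[0] = z'[0] = 0, then z = z' (i.e. z[j] = z'[j] for j = 0,…,n−1) and β = β'. -/
import Mathlib


/-- Injectivity of the mean observation map `E[j] = μ[j] + β` with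
`μ[j] = ∑_{i=0}^{j} h(ri) z[j−i]`, `h(0) = 0`, `h(r) ≠ 0`, `n ≥ 2`: if two pairs
`(z, β)` and `(z', β')` produce identical outputs `E[1],…,E[n]`, then (i) if the
sequences agree (`z[k] = z'[k]` for `k < n`), the intercepts agree; and (ii) if
`z[0] = z'[0] = 0`, then `z[k] = z'[k]` for all `k < n` and `β = β'`. -/
theorem mean_observation_map_injective {d n : ℕ} (hn : 2 ≤ n) (r : ℝ) (hr : 0 < r)
    (h : ℝ → ℝ) (h0 : h 0 = 0) (hhr : h r ≠ 0)
    (z z' : ℕ → Fin d → ℝ) (β β' : Fin d → ℝ)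
    (heq : ∀ j : ℕ, 1 ≤ j → j ≤ n →
      (∑ i ∈ Finset.range (j + 1), h (r * i) • z (j - i)) + β =
      (∑ i ∈ Finset.range (j + 1), h (r * i) • z' (j - i)) + β') :
    ((∀ k < n, z k = z' k) → β = β') ∧
    (z 0 = 0 → z' 0 = 0 → (∀ k < n, z k = z' k) ∧ β = β') := by
  -- key form: the convolved difference equals β' - β
  have key : ∀ j : ℕ, 1 ≤ j → j ≤ n →
      (∑ i ∈ Finset.range (j + 1), h (r * i) • (z (j - i) - z' (j - i))) = β' - β := by
    intro j hj1 hjn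
    have hj := heq j hj1 hjn
    have hsum : (∑ i ∈ Finset.range (j + 1), h (r * i) • (z (j - i) - z' (j - i))) =
        (∑ i ∈ Finset.range (j + 1), h (r * i) • z (j - i)) -
        (∑ i ∈ Finset.range (j + 1), h (r * i) • z' (j - i)) := by
      rw [← Finset.sum_sub_distrib]
      exact Finset.sum_congr rfl (fun i _ => smul_sub _ _ _)
    rw [hsum, sub_eq_sub_iff_add_eq_add]
    rw [add_comm β' _]
    exact hj
  -- at j = 1 : β' - β = h r • (z 0 - z' 0)
  have hb : β' - β = h r • (z 0 - z' 0) := by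
    have k1 := key 1 le_rfl (by omega)
    rw [Finset.sum_range_succ, Finset.sum_range_succ, Finset.sum_range_zero] at k1
    simp only [Nat.cast_zero, Nat.cast_one, mul_zero, mul_one, h0, zero_smul, zero_add,
      Nat.sub_self, Nat.sub_zero] at k1
    exact k1.symm
  have part1 : (∀ k < n, z k = z' k) → β = β' := by
    intro hz
    have hz0 : z 0 - z' 0 = 0 := by rw [hz 0 (by omega)]; simp
    have : β' - β = 0 := by rw [hb, hz0, smul_zero]
    exact (sub_eq_zero.mp this).symm
  refine ⟨part1, fun hz0 hz0' => ?_⟩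
  have hbb : β' - β = 0 := by rw [hb, hz0, hz0']; simp
  have hw : ∀ k, k < n → z k - z' k = 0 := by
    intro k
    induction k using Nat.strong_induction_on with
    | _ k ih =>
      intro hkn
      rcases Nat.eq_zero_or_pos k with rfl | hk
      · rw [hz0, hz0', sub_zero]
      · have hk1 : 1 ≤ k + 1 := by omega
        have hk2 : k + 1 ≤ n := by omega
        have kk := key (k + 1) hk1 hk2
        rw [hbb] at kk
        -- split off the i = 0 and i = 1 terms from below
        rw [Finset.sum_range_succ', Finset.sum_range_succ'] at kk
        have e0 : h (r * (0 : ℕ)) • (z (k + 1 - 0) - z' (k + 1 - 0)) = 0 := by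
          simp [h0]
        have e2 : (∑ i ∈ Finset.range k,
            h (r * (i + 1 + 1 : ℕ)) • (z (k + 1 - (i + 1 + 1)) - z' (k + 1 - (i + 1 + 1)))) = 0 := by
          refine Finset.sum_eq_zero fun i hi => ?_
          have hlt : k + 1 - (i + 1 + 1) < k := by omega
          rw [ih _ hlt (by omega), smul_zero]
        rw [e2, e0, zero_add, add_zero] at kk
        norm_num at kk
        exact kk.resolve_left hhr
  refine ⟨fun k hk => sub_eq_zero.mp (hw k hk), ?_⟩
  have : z 0 - z' 0 = 0 := hw 0 (by omega)
  exact (sub_eq_zero.mp (hb.trans (by rw [this, smul_zero]))).symm
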